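/- In the sequential scheduling game on m unrelated machines where players have k-lookahead (k ≥ 1), every k-lookahead play of all n jobs starting from zero initial loads has makespan at most (m + n·2^k)·OPT; in particular the sequential price of anarchy is O(n·2^k). Combined with the bound (m·k·2^k + m)·OPT, the sequential price of anarchy is O(2^k · min{mk, n}). -/

import Mathlib

/-!
Sequential scheduling game on `m` unrelated machines with `k`-lookahead players.
Machines are indexed by `Fin m`, jobs by natural numbers (a block `[a:b]` of jobs plays
in the order `a, a+1, …, b`), and `p i j` is the processing time of job `j` on machine `i`.
-/

/-- Add the processing time of job `j` on machine `i` to the load vector `D`. -/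
def bump {m : ℕ} (p : Fin m → ℕ → ℝ) (D : Fin m → ℝ) (i : Fin m) (j : ℕ) : Fin m → ℝ :=
  fun i' => D i' + if i' = i then p i j else 0

/-- `Out p D js F`: `F` is the final load vector of some backward-induction
(subgame-perfect, ties broken arbitrarily) play of the finite extensive game in which
the jobs in `js` choose machines in order, starting from loads `D`; the payoff of each
job is the load, after all of these moves, of the machine it chose. -/
inductive Out {m : ℕ} (p : Fin m → ℕ → ℝ) : (Fin m → ℝ) → List ℕ → (Fin m → ℝ) → Prop
  | nil (D : Fin m → ℝ) : Out p D [] D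
  | cons (D : Fin m → ℝ) (j : ℕ) (js : List ℕ) (i : Fin m) (cont : Fin m → Fin m → ℝ)
      (hcont : ∀ i', Out p (bump p D i' j) js (cont i'))
      (hopt : ∀ i', cont i i ≤ cont i' i') :
      Out p D (j :: js) (cont i)

/-- `i` is an optimal root move, for the root job `j` followed by the jobs `js`,
of the lookahead game starting from loads `D`, solved by backward induction
(ties broken arbitrarily). -/
def RootMove {m : ℕ} (p : Fin m → ℕ → ℝ) (D : Fin m → ℝ) (j : ℕ) (js : List ℕ)
    (i : Fin m) : Prop :=
  ∃ cont : Fin m → Fin m → ℝ,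
    (∀ i', Out p (bump p D i' j) js (cont i')) ∧ (∀ i', cont i i ≤ cont i' i')

/-- `Play p k D a b F`: starting from initial loads `D`, the block `[a:b]` of jobs plays a
`k`-lookahead play resulting in final loads `F`: the first remaining job `a` makes an
optimal root move of the lookahead game on jobs `a, a+1, …, min (a+k) b`, its processing
time is added to the chosen machine, and the remaining jobs continue. -/
inductive Play {m : ℕ} (p : Fin m → ℕ → ℝ) (k : ℕ) :
    (Fin m → ℝ) → ℕ → ℕ → (Fin m → ℝ) → Prop
  | nil (D : Fin m → ℝ) (a b : ℕ) (h : b < a) : Play p k D a b D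
  | cons (D : Fin m → ℝ) (a b : ℕ) (i : Fin m) (F : Fin m → ℝ) (hab : a ≤ b)
      (hroot : RootMove p D a (List.range' (a + 1) (min (a + k) b - a)) i)
      (hplay : Play p k (bump p D i a) (a + 1) b F) :
      Play p k D a b F

/-- Maximum load of a load vector. -/
noncomputable def maxLoad {m : ℕ} (D : Fin m → ℝ) : ℝ := ⨆ i, D i

/-- `ΔL([a:b])`: the maximum possible increase of the makespan caused by the block
`[a:b]` of jobs, over all nonnegative initial loads and all `k`-lookahead plays. -/
noncomputable def deltaL {m : ℕ} (p : Fin m → ℕ → ℝ) (k a b : ℕ) : ℝ :=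
  sSup {x | ∃ D F : Fin m → ℝ,
    (∀ i, 0 ≤ D i) ∧ Play p k D a b F ∧ x = maxLoad F - maxLoad D}

/-- Minimum processing time of job `j`. -/
noncomputable def pmin {m : ℕ} (p : Fin m → ℕ → ℝ) (j : ℕ) : ℝ := ⨅ i, p i j

/-- Makespan of an arbitrary schedule `τ` of jobs `1, …, n` on `m` machines. -/
noncomputable def makespanM {m : ℕ} (n : ℕ) (p : Fin m → ℕ → ℝ) (τ : ℕ → Fin m) : ℝ :=
  ⨆ i, ∑ j ∈ Finset.Icc 1 n, if τ j = i then p i j else 0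

/-- Optimal (minimum) makespan over all schedules of jobs `1, …, n`. -/
noncomputable def OPTm {m : ℕ} (n : ℕ) (p : Fin m → ℕ → ℝ) : ℝ :=
  sInf {x | ∃ τ : ℕ → Fin m, x = makespanM n p τ}

/-!
A job of a lookahead game may always deviate to a machine where its processing time is
`pmin p j`. By induction over its followers, its final load after such a deviation is at most
`maxLoad D + pmin p j + W followers` for any potential `W` with
`pmin p j + 2 * W t ≤ W (j :: t)`; so the load it actually secures, and with it the makespan right
after its move, is no larger. Summing over the jobs bounds the makespan by
`∑ j, (pmin p j + W (followers of j))`. The potential `(2 ^ |l| - 1) * OPT` gives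
`n * 2 ^ k * OPT`, as every `pmin p j ≤ OPT`; the potential `(2 ^ |l| - 1) * ∑_{j ∈ l} pmin p j`
gives `(k * 2 ^ k + 1) * ∑ j, pmin p j ≤ (m * k * 2 ^ k + m) * OPT`, as every job follows at
most `k` others.
-/

open Finset

variable {m : ℕ} {p : Fin m → ℕ → ℝ}

section Loads

theorem le_maxLoad (D : Fin m → ℝ) (i : Fin m) : D i ≤ maxLoad D :=
  le_ciSup (Set.finite_range D).bddAbove i

theorem maxLoad_le [Nonempty (Fin m)] {D : Fin m → ℝ} {c : ℝ} (h : ∀ i, D i ≤ c) :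
    maxLoad D ≤ c :=
  ciSup_le h

theorem maxLoad_const [Nonempty (Fin m)] (c : ℝ) : maxLoad (fun _ : Fin m => c) = c :=
  ciSup_const

theorem bump_self (D : Fin m → ℝ) (i : Fin m) (j : ℕ) : bump p D i j i = D i + p i j := by
  simp [bump]

theorem bump_of_ne (D : Fin m → ℝ) {i i' : Fin m} (j : ℕ) (h : i' ≠ i) :
    bump p D i j i' = D i' := by
  simp [bump, h]

theorem le_bump (D : Fin m → ℝ) {i : Fin m} {j : ℕ} (hp : 0 ≤ p i j) (i' : Fin m) :
    D i' ≤ bump p D i j i' := by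
  by_cases h : i' = i
  · subst h
    rw [bump_self]
    linarith
  · rw [bump_of_ne D j h]

theorem bump_le_max_maxLoad (D : Fin m → ℝ) (i i' : Fin m) (j : ℕ) :
    bump p D i j i' ≤ max (D i') (maxLoad (bump p D i j)) := by
  by_cases h : i' = i
  · exact le_max_of_le_right (le_maxLoad _ _)
  · rw [bump_of_ne D j h]
    exact le_max_left _ _

theorem maxLoad_bump_le [Nonempty (Fin m)] {D : Fin m → ℝ} {i : Fin m} {j : ℕ} {c : ℝ}
    (hD : maxLoad D ≤ c) (hi : D i + p i j ≤ c) : maxLoad (bump p D i j) ≤ c := by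
  refine maxLoad_le fun i' => ?_
  by_cases h : i' = i
  · subst h
    rwa [bump_self]
  · rw [bump_of_ne D j h]
    exact (le_maxLoad D i').trans hD

theorem pmin_le (i : Fin m) (j : ℕ) : pmin p j ≤ p i j :=
  ciInf_le (Set.finite_range _).bddBelow i

theorem pmin_nonneg [Nonempty (Fin m)] (hp : ∀ i j, 0 ≤ p i j) (j : ℕ) : 0 ≤ pmin p j :=
  le_ciInf fun i => hp i j

theorem exists_eq_pmin [Nonempty (Fin m)] (j : ℕ) : ∃ i, p i j = pmin p j :=
  exists_eq_ciInf_of_finite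

end Loads

section Optimum

variable {n : ℕ}

theorem le_OPTm [Nonempty (Fin m)] {c : ℝ} (h : ∀ τ : ℕ → Fin m, c ≤ makespanM n p τ) :
    c ≤ OPTm n p :=
  le_csInf ⟨_, fun _ => Classical.arbitrary _, rfl⟩ (by rintro x ⟨τ, rfl⟩; exact h τ)

theorem load_le_makespanM (τ : ℕ → Fin m) (i : Fin m) :
    ∑ j ∈ Icc 1 n, (if τ j = i then p i j else 0) ≤ makespanM n p τ :=
  le_ciSup (f := fun i => ∑ j ∈ Icc 1 n, if τ j = i then p i j else 0)
    (Set.finite_range _).bddAbove i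

theorem load_nonneg (hp : ∀ i j, 0 ≤ p i j) (τ : ℕ → Fin m) (i : Fin m) :
    0 ≤ ∑ j ∈ Icc 1 n, (if τ j = i then p i j else 0) :=
  sum_nonneg fun j _ => by split_ifs <;> simp [hp]

theorem pmin_le_makespanM (hp : ∀ i j, 0 ≤ p i j) (τ : ℕ → Fin m) {j : ℕ} (hj : j ∈ Icc 1 n) :
    pmin p j ≤ makespanM n p τ :=
  calc pmin p j ≤ p (τ j) j := pmin_le _ _
    _ ≤ ∑ j' ∈ Icc 1 n, (if τ j' = τ j then p (τ j) j' else 0) := by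
        simpa using single_le_sum (f := fun j' => if τ j' = τ j then p (τ j) j' else 0)
          (fun j' _ => by split_ifs <;> simp [hp]) hj
    _ ≤ makespanM n p τ := load_le_makespanM τ (τ j)

theorem OPTm_nonneg [Nonempty (Fin m)] (hp : ∀ i j, 0 ≤ p i j) : 0 ≤ OPTm n p :=
  le_OPTm fun τ => (load_nonneg hp τ (Classical.arbitrary _)).trans (load_le_makespanM τ _)

theorem pmin_le_OPTm [Nonempty (Fin m)] (hp : ∀ i j, 0 ≤ p i j) {j : ℕ} (hj : j ∈ Icc 1 n) :
    pmin p j ≤ OPTm n p :=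
  le_OPTm fun τ => pmin_le_makespanM hp τ hj

theorem sum_pmin_le_mul_makespanM (τ : ℕ → Fin m) :
    ∑ j ∈ Icc 1 n, pmin p j ≤ m * makespanM n p τ :=
  calc ∑ j ∈ Icc 1 n, pmin p j ≤ ∑ j ∈ Icc 1 n, p (τ j) j := sum_le_sum fun j _ => pmin_le _ _
    _ = ∑ i : Fin m, ∑ j ∈ Icc 1 n, (if τ j = i then p i j else 0) := by
        rw [sum_comm]
        simp
    _ ≤ m * makespanM n p τ := by
        simpa using sum_le_card_nsmul univ _ _ fun i _ => load_le_makespanM τ i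

theorem sum_pmin_le_mul_OPTm [Nonempty (Fin m)] :
    ∑ j ∈ Icc 1 n, pmin p j ≤ m * OPTm n p := by
  have hm : (0 : ℝ) < m := by exact_mod_cast Fin.pos_iff_nonempty.mpr ‹_›
  rw [← div_le_iff₀' hm]
  exact le_OPTm fun τ => (div_le_iff₀' hm).mpr (sum_pmin_le_mul_makespanM τ)

end Optimum

section Followers

/-- The jobs after `j` that take part in its lookahead game, when the last job is `b`. -/
def followers (k b j : ℕ) : List ℕ := List.range' (j + 1) (min (j + k) b - j)

theorem mem_followers {k b j j' : ℕ} : j' ∈ followers k b j ↔ j < j' ∧ j' ≤ min (j + k) b := by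
  rw [followers, List.mem_range'_1]
  omega

theorem length_followers_le (k b j : ℕ) : (followers k b j).length ≤ k := by
  simp only [followers, List.length_range']
  omega

theorem sum_map_followers (f : ℕ → ℝ) (k b j : ℕ) :
    ((followers k b j).map f).sum = ∑ j' ∈ Ioc j (min (j + k) b), f j' := by
  rw [followers, ← List.sum_toFinset f List.nodup_range']
  congr 1
  ext j'
  rw [List.mem_toFinset, mem_Ioc]
  exact mem_followers

theorem sum_sum_followers_le {f : ℕ → ℝ} (hf : ∀ j, 0 ≤ f j) (k a b : ℕ) :
    ∑ j ∈ Icc a b, ((followers k b j).map f).sum ≤ k * ∑ j ∈ Icc a b, f j := by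
  simp only [sum_map_followers]
  -- each `j'` is a follower of exactly the jobs in `Ico (max a (j' - k)) j'`
  rw [sum_comm' (t' := Icc a b) (s' := fun j' => Ico (max a (j' - k)) j')
    (fun j j' => by simp only [mem_Icc, mem_Ioc, mem_Ico, max_le_iff]; omega), mul_sum]
  refine sum_le_sum fun j' _ => ?_
  rw [sum_const, Nat.card_Ico, nsmul_eq_mul]
  exact mul_le_mul_of_nonneg_right (by exact_mod_cast (by omega : j' - max a (j' - k) ≤ k))
    (hf j')

end Followers

section Lookahead

/-- `W l` bounds the makespan increase caused by the jobs in `l` when they follow a job in its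
lookahead game. -/
structure IsLookaheadPotential (p : Fin m → ℕ → ℝ) (J : Set ℕ) (W : List ℕ → ℝ) : Prop where
  nonneg : ∀ l, 0 ≤ W l
  step : ∀ j ∈ J, ∀ t, pmin p j + 2 * W t ≤ W (j :: t)

theorem isLookaheadPotential_two_pow_sub_one_mul {J : Set ℕ} {g : List ℕ → ℝ}
    (hg : ∀ l, 0 ≤ g l) (hg_cons : ∀ j t, g t ≤ g (j :: t))
    (hpmin : ∀ j ∈ J, ∀ t, pmin p j ≤ g (j :: t)) :
    IsLookaheadPotential p J fun l => (2 ^ l.length - 1) * g l where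
  nonneg l := mul_nonneg (by linarith [one_le_pow₀ (M₀ := ℝ) (n := l.length) one_le_two]) (hg l)
  step j hj t := by
    have hpow : (1 : ℝ) ≤ 2 ^ t.length := one_le_pow₀ one_le_two
    have hgrow := mul_le_mul_of_nonneg_left (hg_cons j t) (by linarith : (0 : ℝ) ≤ 2 ^ t.length - 1)
    simp only [List.length_cons, pow_succ]
    nlinarith [hpmin j hj t]

theorem Out.le_apply (hp : ∀ i j, 0 ≤ p i j) {D G : Fin m → ℝ} {js : List ℕ}
    (h : Out p D js G) (i : Fin m) : D i ≤ G i := by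
  induction h generalizing i with
  | nil => exact le_rfl
  | cons D j js i' cont _ _ ih => exact (le_bump D (hp i' j) i).trans (ih i' i)

/-- The mover `j` could have deviated to a machine of processing time `pmin p j`, where it would
have ended at load at most `maxLoad D + pmin p j + w`; so it secured no more, and neither did the
load of its machine right after its move. -/
theorem maxLoad_bump_le_of_optimal (hp : ∀ i j, 0 ≤ p i j) {D : Fin m → ℝ} {j : ℕ} {i : Fin m}
    {w : ℝ} (hw : 0 ≤ w) {cont : Fin m → Fin m → ℝ} (hmove : bump p D i j i ≤ cont i i)
    (hcont : ∀ i', cont i' i' ≤ max (bump p D i' j i') (maxLoad (bump p D i' j) + w))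
    (hopt : ∀ i', cont i i ≤ cont i' i') :
    maxLoad (bump p D i j) ≤ maxLoad D + pmin p j + w := by
  have : Nonempty (Fin m) := ⟨i⟩
  have hpj := pmin_nonneg hp j
  obtain ⟨i', hi'⟩ := exists_eq_pmin (p := p) j
  have hdev : maxLoad (bump p D i' j) ≤ maxLoad D + pmin p j :=
    maxLoad_bump_le (by linarith) (by rw [hi']; linarith [le_maxLoad D i'])
  have hsecured : cont i i ≤ maxLoad D + pmin p j + w :=
    (hopt i').trans ((hcont i').trans
      (max_le (by linarith [le_maxLoad (bump p D i' j) i']) (by linarith)))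
  exact maxLoad_bump_le (by linarith) (by rw [← bump_self]; linarith)

variable {J : Set ℕ} {W : List ℕ → ℝ}

theorem Out.apply_le_max (hp : ∀ i j, 0 ≤ p i j) (hW : IsLookaheadPotential p J W)
    {D G : Fin m → ℝ} {js : List ℕ} (h : Out p D js G) (hJ : ∀ j ∈ js, j ∈ J) (i₀ : Fin m) :
    G i₀ ≤ max (D i₀) (maxLoad D + W js) := by
  induction h generalizing i₀ with
  | nil D => exact le_max_left _ _
  | cons D j js i cont hcont hopt ih =>
    have hjs : ∀ j' ∈ js, j' ∈ J := fun j' hj' => hJ j' (List.mem_cons_of_mem _ hj')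
    have hmove := maxLoad_bump_le_of_optimal hp (hW.nonneg js) ((hcont i).le_apply hp i)
      (fun i' => ih i' hjs i') hopt
    have hstep := hW.step j (hJ j List.mem_cons_self) js
    have hWjs := hW.nonneg js
    calc cont i i₀ ≤ max (bump p D i j i₀) (maxLoad (bump p D i j) + W js) := ih i hjs i₀
      _ ≤ max (D i₀) (maxLoad D + W (j :: js)) :=
        max_le ((bump_le_max_maxLoad D i i₀ j).trans (max_le_max le_rfl (by linarith)))
          (le_max_of_le_right (by linarith))

theorem Play.maxLoad_le_add_sum (hp : ∀ i j, 0 ≤ p i j) (hW : IsLookaheadPotential p J W)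
    {k a b : ℕ} {D F : Fin m → ℝ} (h : Play p k D a b F) (hJ : ∀ j, a < j → j ≤ b → j ∈ J) :
    maxLoad F ≤ maxLoad D + ∑ j ∈ Icc a b, (pmin p j + W (followers k b j)) := by
  induction h with
  | nil D a b hba => simp [Icc_eq_empty_of_lt hba]
  | cons D a b i F hab hroot _ ih =>
    obtain ⟨cont, hcont, hopt⟩ := hroot
    have hfol : ∀ j ∈ followers k b a, j ∈ J := fun j hj => by
      rw [mem_followers] at hj
      exact hJ j (by omega) (by omega)
    have hmove : maxLoad (bump p D i a) ≤ maxLoad D + pmin p a + W (followers k b a) :=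
      maxLoad_bump_le_of_optimal hp (hW.nonneg _) ((hcont i).le_apply hp i)
        (fun i' => (hcont i').apply_le_max hp hW hfol i') hopt
    have hrest := ih fun j h1 h2 => hJ j (by omega) h2
    rw [Icc_eq_cons_Ioc hab, sum_cons, ← Icc_add_one_left_eq_Ioc]
    linarith

theorem Play.maxLoad_le_add_sum_two_pow_sub_one_mul (hp : ∀ i j, 0 ≤ p i j) {k a b : ℕ}
    {D F : Fin m → ℝ} (h : Play p k D a b F) {g : List ℕ → ℝ} (hg : ∀ l, 0 ≤ g l)
    (hg_cons : ∀ j t, g t ≤ g (j :: t)) (hpmin : ∀ j ∈ J, ∀ t, pmin p j ≤ g (j :: t))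
    (hJ : ∀ j, a < j → j ≤ b → j ∈ J) :
    maxLoad F ≤ maxLoad D + ∑ j ∈ Icc a b, (pmin p j + (2 ^ k - 1) * g (followers k b j)) := by
  refine (h.maxLoad_le_add_sum hp (isLookaheadPotential_two_pow_sub_one_mul hg hg_cons hpmin)
    hJ).trans ?_
  gcongr with j
  · exact hg _
  · exact one_le_two
  · exact length_followers_le k b j

theorem Play.maxLoad_le_add_card_mul (hp : ∀ i j, 0 ≤ p i j) {k a b : ℕ} {D F : Fin m → ℝ}
    (h : Play p k D a b F) {c : ℝ} (hc₀ : 0 ≤ c) (hc : ∀ j ∈ Icc a b, pmin p j ≤ c) :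
    maxLoad F ≤ maxLoad D + #(Icc a b) * (2 ^ k * c) :=
  calc maxLoad F ≤ maxLoad D + ∑ j ∈ Icc a b, (pmin p j + (2 ^ k - 1) * c) :=
        h.maxLoad_le_add_sum_two_pow_sub_one_mul hp (J := {j | pmin p j ≤ c}) (g := fun _ => c)
          (fun _ => hc₀) (fun _ _ => le_rfl) (fun _ hj _ => hj)
          fun j h₁ h₂ => hc j (mem_Icc.mpr ⟨h₁.le, h₂⟩)
    _ ≤ maxLoad D + ∑ _j ∈ Icc a b, 2 ^ k * c := by
        gcongr with j hj
        linarith [hc j hj]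
    _ = maxLoad D + #(Icc a b) * (2 ^ k * c) := by rw [sum_const, nsmul_eq_mul]

theorem Play.maxLoad_le_add_mul_sum_pmin [Nonempty (Fin m)] (hp : ∀ i j, 0 ≤ p i j)
    {k a b : ℕ} {D F : Fin m → ℝ} (h : Play p k D a b F) :
    maxLoad F ≤ maxLoad D + (k * 2 ^ k + 1) * ∑ j ∈ Icc a b, pmin p j := by
  have hsum (l : List ℕ) : 0 ≤ (l.map (pmin p)).sum :=
    List.sum_nonneg (List.forall_mem_map.mpr fun j _ => pmin_nonneg hp j)
  have hpow : (0 : ℝ) ≤ 2 ^ k - 1 := by linarith [one_le_pow₀ (M₀ := ℝ) (n := k) one_le_two]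
  set S := ∑ j ∈ Icc a b, pmin p j
  have hS : 0 ≤ S := sum_nonneg fun j _ => pmin_nonneg hp j
  calc maxLoad F ≤ maxLoad D +
        ∑ j ∈ Icc a b, (pmin p j + (2 ^ k - 1) * ((followers k b j).map (pmin p)).sum) :=
        h.maxLoad_le_add_sum_two_pow_sub_one_mul hp (J := Set.univ) hsum
          (fun j t => by simpa using pmin_nonneg hp j) (fun j _ t => by simpa using hsum t)
          fun _ _ _ => trivial
    _ ≤ maxLoad D + (S + (2 ^ k - 1) * (k * S)) := by
        rw [sum_add_distrib, ← mul_sum]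
        gcongr
        exact sum_sum_followers_le (pmin_nonneg hp) k a b
    _ ≤ maxLoad D + (k * 2 ^ k + 1) * S := by nlinarith [(by positivity : (0 : ℝ) ≤ k * S)]

end Lookahead

theorem spoa_kLookahead_m_machines_min_general (m k n : ℕ) (hm : 0 < m)
    (p : Fin m → ℕ → ℝ) (hp : ∀ i j, 0 ≤ p i j)
    (F : Fin m → ℝ) (hF : Play p k (fun _ => 0) 1 n F) :
    maxLoad F ≤ ((m : ℝ) + n * 2 ^ k) * OPTm n p ∧
      maxLoad F ≤ ((m : ℝ) * k * 2 ^ k + m) * OPTm n p := by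
  have : Nonempty (Fin m) := ⟨⟨0, hm⟩⟩
  have hOPT : 0 ≤ OPTm n p := OPTm_nonneg hp
  have hjobs := hF.maxLoad_le_add_card_mul hp hOPT fun j hj => pmin_le_OPTm hp hj
  have hmachines := hF.maxLoad_le_add_mul_sum_pmin hp
  have hS : ∑ j ∈ Icc 1 n, pmin p j ≤ m * OPTm n p := sum_pmin_le_mul_OPTm
  simp only [maxLoad_const, Nat.card_Icc, Nat.add_sub_cancel, zero_add] at hjobs hmachines
  constructor
  · nlinarith [(by positivity : (0 : ℝ) ≤ m)]
  · nlinarith [(by positivity : (0 : ℝ) ≤ k * 2 ^ k + 1)]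

/-- On `m` unrelated machines with `k`-lookahead players (`k ≥ 1`),
every `k`-lookahead play of all `n` jobs from zero initial loads has makespan at most
`(m + n·2^k) · OPT`; combined with the bound `(m·k·2^k + m) · OPT`, the sequential
price of anarchy is `O(2^k · min {mk, n})`. -/
theorem spoa_kLookahead_m_machines_min (m k n : ℕ) (hm : 0 < m) (hk : 1 ≤ k)
    (p : Fin m → ℕ → ℝ) (hp : ∀ i j, 0 ≤ p i j)
    (F : Fin m → ℝ) (hF : Play p k (fun _ => 0) 1 n F) :
    maxLoad F ≤ ((m : ℝ) + n * 2 ^ k) * OPTm n p ∧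
      maxLoad F ≤ ((m : ℝ) * k * 2 ^ k + m) * OPTm n p :=
  spoa_kLookahead_m_machines_min_general m k n hm p hp F hF
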